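/- arXiv:2209.11850 — 4 statements merged into one kernel-verified Lean document; each statement's English description precedes it below -/
import Mathlib

section
/- Let n ≥ 2 and N ≥ 1. If f belongs to the cone 𝓔, then E f ≥ 0 (first Griffiths inequality for non-interacting rotors). -/
/-!
Expanding `⟪σ_i, σ_j⟫ = ∑_a σ_i^a σ_j^a` shows that every `f ∈ 𝓔` is a polynomial
with nonnegative coefficients in the coordinates `σ_i^a`. The spins are independent, so
the integral of a monomial factors into one-sphere integrals of `∏_a v_a ^ m_a`. Such an
integral vanishes as soon as some `m_a` is odd, because the reflection `v_a ↦ -v_a`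
preserves the uniform measure and flips the sign of the integrand; otherwise the integrand
is nonnegative.
-/

open MeasureTheory RealInnerProductSpace

/-- The normalized (uniform probability) measure on the unit sphere `S^{n-1} ⊂ ℝ^n`. -/
noncomputable def sphereUniform (n : ℕ) :
    Measure (Metric.sphere (0 : EuclideanSpace ℝ (Fin n)) 1) :=
  ((volume : Measure (EuclideanSpace ℝ (Fin n))).toSphere Set.univ)⁻¹ •
    (volume : Measure (EuclideanSpace ℝ (Fin n))).toSphere

/-- The product measure `dσ₁ ⋯ dσ_N` of `N` copies of the normalized uniform measure. -/
noncomputable def spinMeasure (n N : ℕ) :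
    Measure (Fin N → Metric.sphere (0 : EuclideanSpace ℝ (Fin n)) 1) :=
  Measure.pi fun _ => sphereUniform n

/-- The cone `𝓔` of finite linear combinations with nonnegative coefficients of monomials
`∏_{1 ≤ i < j ≤ N} (σ_i · σ_j)^{n_{ij}}`. -/
def InCone (n N : ℕ)
    (f : (Fin N → Metric.sphere (0 : EuclideanSpace ℝ (Fin n)) 1) → ℝ) : Prop :=
  ∃ (K : ℕ) (c : Fin K → ℝ) (e : Fin K → Fin N → Fin N → ℕ),
    (∀ k, 0 ≤ c k) ∧
    ∀ σ, f σ = ∑ k, c k *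
      ∏ p ∈ Finset.univ.filter (fun p : Fin N × Fin N => p.1 < p.2),
        (⟪(σ p.1 : EuclideanSpace ℝ (Fin n)), (σ p.2 : EuclideanSpace ℝ (Fin n))⟫ : ℝ)
          ^ e k p.1 p.2

open Set Metric
open scoped Pointwise

theorem MeasureTheory.Measure.isFiniteMeasure_inv_measure_univ_smul {α : Type*}
    [MeasurableSpace α] (μ : Measure α) [IsFiniteMeasure μ] :
    IsFiniteMeasure ((μ univ)⁻¹ • μ) := by
  -- for `μ = 0` the factor is `0⁻¹ = ∞`, but `∞ • 0 = 0`
  rcases eq_zero_or_neZero μ with rfl | _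
  · rw [smul_zero]
    infer_instance
  · infer_instance

theorem MeasureTheory.integral_eq_zero_of_comp_eq_neg {α : Type*} [MeasurableSpace α]
    {μ : Measure α} {T : α → α} (hT : MeasurePreserving T μ μ) (hTe : MeasurableEmbedding T)
    {g : α → ℝ} (hg : ∀ x, g (T x) = -g x) : ∫ x, g x ∂μ = 0 := by
  have h := hT.integral_comp hTe g
  simp only [hg, integral_neg] at h
  linarith

section UnitSphere

variable {E : Type*} [NormedAddCommGroup E] [NormedSpace ℝ E]

def LinearIsometryEquiv.unitSphereHomeomorph (e : E ≃ₗᵢ[ℝ] E) :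
    sphere (0 : E) 1 ≃ₜ sphere (0 : E) 1 :=
  e.toHomeomorph.subtype fun x => by simp

theorem LinearIsometryEquiv.image_set_smul (e : E ≃ₗᵢ[ℝ] E) (t : Set ℝ) (s : Set E) :
    e '' (t • s) = t • e '' s :=
  image_image2_distrib_right fun c x => _root_.map_smul e c x

variable [MeasurableSpace E] [BorelSpace E]

theorem LinearIsometryEquiv.measurePreserving_unitSphereHomeomorph {μ : Measure E}
    (e : E ≃ₗᵢ[ℝ] E) (he : MeasurePreserving e μ μ) :
    MeasurePreserving e.unitSphereHomeomorph μ.toSphere μ.toSphere := by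
  have hmeas := e.unitSphereHomeomorph.continuous.measurable
  refine ⟨hmeas, Measure.ext fun s hs => ?_⟩
  have hval : Subtype.val '' (e.unitSphereHomeomorph ⁻¹' s) = e.symm '' (Subtype.val '' s) := by
    rw [← Homeomorph.image_symm, image_image, image_image]
    rfl
  rw [Measure.map_apply hmeas hs, Measure.toSphere_apply' _ (hmeas hs),
    Measure.toSphere_apply' _ hs, hval, ← e.symm.image_set_smul, e.symm.image_eq_preimage_symm,
    e.symm_symm, he.measure_preimage_emb e.toHomeomorph.measurableEmbedding]

end UnitSphere

section Reflection

variable {ι : Type*} [Fintype ι] [DecidableEq ι]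

noncomputable def EuclideanSpace.reflectCoord (a : ι) :
    EuclideanSpace ℝ ι ≃ₗᵢ[ℝ] EuclideanSpace ℝ ι :=
  LinearIsometryEquiv.piLpCongrRight 2
    fun i => if i = a then LinearIsometryEquiv.neg ℝ else LinearIsometryEquiv.refl ℝ ℝ

theorem EuclideanSpace.reflectCoord_apply (a : ι) (x : EuclideanSpace ℝ ι) (i : ι) :
    reflectCoord a x i = if i = a then -x i else x i := by
  split_ifs with h <;> simp [reflectCoord, h]

end Reflection

instance (n : ℕ) : IsFiniteMeasure (sphereUniform n) :=
  Measure.isFiniteMeasure_inv_measure_univ_smul _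

instance (n N : ℕ) : IsFiniteMeasure (spinMeasure n N) := by
  unfold spinMeasure
  infer_instance

theorem integral_sphereUniform_prod_pow_eq_zero {n : ℕ} (m : Fin n → ℕ) {a : Fin n}
    (ha : Odd (m a)) :
    ∫ v, ∏ b, (v : EuclideanSpace ℝ (Fin n)) b ^ m b ∂(sphereUniform n) = 0 := by
  let R := (EuclideanSpace.reflectCoord a).unitSphereHomeomorph
  have hR : MeasurePreserving R (sphereUniform n) (sphereUniform n) := by
    simpa [sphereUniform] using
      ((EuclideanSpace.reflectCoord a).measurePreserving_unitSphereHomeomorph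
        (EuclideanSpace.reflectCoord a).measurePreserving).smul_measure _
  refine integral_eq_zero_of_comp_eq_neg hR R.measurableEmbedding fun v => ?_
  have hRv (b : Fin n) : (R v : EuclideanSpace ℝ (Fin n)) b =
      if b = a then -(v : EuclideanSpace ℝ (Fin n)) b else (v : EuclideanSpace ℝ (Fin n)) b :=
    EuclideanSpace.reflectCoord_apply a v b
  simp only [hRv]
  rw [Fintype.prod_eq_mul_prod_compl a, Fintype.prod_eq_mul_prod_compl a, if_pos rfl,
    ha.neg_pow, neg_mul]
  congr 2
  exact Finset.prod_congr rfl fun b hb => by rw [if_neg (by simpa using hb)]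

theorem integral_sphereUniform_prod_pow_nonneg {n : ℕ} (m : Fin n → ℕ) :
    0 ≤ ∫ v, ∏ b, (v : EuclideanSpace ℝ (Fin n)) b ^ m b ∂(sphereUniform n) := by
  by_cases heven : ∀ b, Even (m b)
  · exact integral_nonneg fun v => Finset.prod_nonneg fun b _ => (heven b).pow_nonneg _
  · push Not at heven
    obtain ⟨a, ha⟩ := heven
    exact (integral_sphereUniform_prod_pow_eq_zero m (Nat.not_even_iff_odd.mp ha)).ge

namespace MvPolynomial

variable (σ R : Type*) [CommSemiring R] [PartialOrder R] [IsOrderedRing R]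

def nonnegCoeffs : Subsemiring (MvPolynomial σ R) where
  carrier := {P | ∀ d, 0 ≤ P.coeff d}
  zero_mem' d := by simp
  one_mem' d := by
    classical
    rw [coeff_one]
    split_ifs <;> simp
  add_mem' hP hQ d := by
    rw [coeff_add]
    exact add_nonneg (hP d) (hQ d)
  mul_mem' hP hQ d := by
    classical
    rw [coeff_mul]
    exact Finset.sum_nonneg fun x _ => mul_nonneg (hP _) (hQ _)

variable {σ R}

theorem C_mem_nonnegCoeffs {c : R} (hc : 0 ≤ c) : C c ∈ nonnegCoeffs σ R := fun d => by
  classical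
  rw [coeff_C]
  split_ifs <;> simp [hc]

theorem X_mem_nonnegCoeffs (i : σ) : X i ∈ nonnegCoeffs σ R := fun d => by
  classical
  rw [coeff_X]
  split_ifs <;> simp

end MvPolynomial

open MvPolynomial

section Spins

variable {n N : ℕ}

def spinCoords (σ : Fin N → sphere (0 : EuclideanSpace ℝ (Fin n)) 1) (p : Fin N × Fin n) :
    ℝ :=
  (σ p.1 : EuclideanSpace ℝ (Fin n)) p.2

@[fun_prop]
theorem continuous_spinCoords (p : Fin N × Fin n) :
    Continuous fun σ : Fin N → sphere (0 : EuclideanSpace ℝ (Fin n)) 1 => spinCoords σ p := by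
  unfold spinCoords
  fun_prop

theorem integral_spinMeasure_prod_pow_nonneg (m : Fin N × Fin n → ℕ) :
    0 ≤ ∫ σ, ∏ p, spinCoords σ p ^ m p ∂(spinMeasure n N) := by
  simp only [Fintype.prod_prod_type, spinCoords]
  rw [spinMeasure, integral_fintype_prod_eq_prod
    fun i (v : sphere (0 : EuclideanSpace ℝ (Fin n)) 1) =>
      ∏ b, (v : EuclideanSpace ℝ (Fin n)) b ^ m (i, b)]
  exact Finset.prod_nonneg fun i _ => integral_sphereUniform_prod_pow_nonneg _

theorem integral_eval_spinCoords_nonneg {P : MvPolynomial (Fin N × Fin n) ℝ}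
    (hP : P ∈ nonnegCoeffs _ ℝ) :
    0 ≤ ∫ σ, eval (spinCoords σ) P ∂(spinMeasure n N) := by
  have hint (d : Fin N × Fin n →₀ ℕ) :
      Integrable (fun σ => P.coeff d * ∏ p, spinCoords σ p ^ d p) (spinMeasure n N) :=
    Continuous.integrable_of_hasCompactSupport (by fun_prop) (.of_compactSpace _)
  simp only [eval_eq']
  rw [integral_finsetSum _ fun d _ => hint d]
  refine Finset.sum_nonneg fun d _ => ?_
  rw [integral_const_mul]
  exact mul_nonneg (hP d) (integral_spinMeasure_prod_pow_nonneg d)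

variable (n) in
noncomputable def spinInnerPoly (i j : Fin N) : MvPolynomial (Fin N × Fin n) ℝ :=
  ∑ a, X (i, a) * X (j, a)

theorem spinInnerPoly_mem_nonnegCoeffs (i j : Fin N) :
    spinInnerPoly n i j ∈ nonnegCoeffs _ ℝ :=
  sum_mem fun _ _ => mul_mem (X_mem_nonnegCoeffs _) (X_mem_nonnegCoeffs _)

theorem eval_spinInnerPoly (σ : Fin N → sphere (0 : EuclideanSpace ℝ (Fin n)) 1)
    (i j : Fin N) :
    eval (spinCoords σ) (spinInnerPoly n i j) =
      ⟪(σ i : EuclideanSpace ℝ (Fin n)), (σ j : EuclideanSpace ℝ (Fin n))⟫ := by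
  simp [spinInnerPoly, spinCoords, PiLp.inner_apply, mul_comm]

theorem InCone.exists_eval_eq {f : (Fin N → sphere (0 : EuclideanSpace ℝ (Fin n)) 1) → ℝ}
    (hf : InCone n N f) : ∃ P ∈ nonnegCoeffs _ ℝ, ∀ σ, f σ = eval (spinCoords σ) P := by
  obtain ⟨K, c, e, hc, hfe⟩ := hf
  refine ⟨∑ k, C (c k) * ∏ p ∈ Finset.univ.filter (fun p : Fin N × Fin N => p.1 < p.2),
      spinInnerPoly n p.1 p.2 ^ e k p.1 p.2, ?_, fun σ => ?_⟩
  · exact sum_mem fun k _ => mul_mem (C_mem_nonnegCoeffs (hc k))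
      (prod_mem fun p _ => pow_mem (spinInnerPoly_mem_nonnegCoeffs _ _) _)
  · simp only [hfe, map_sum, map_mul, map_prod, map_pow, eval_C, eval_spinInnerPoly]

end Spins

theorem first_griffiths_noninteracting_general (n N : ℕ)
    (f : (Fin N → Metric.sphere (0 : EuclideanSpace ℝ (Fin n)) 1) → ℝ)
    (hf : InCone n N f) :
    0 ≤ ∫ σ, f σ ∂(spinMeasure n N) := by
  obtain ⟨P, hP, hfP⟩ := hf.exists_eval_eq
  simp only [hfP]
  exact integral_eval_spinCoords_nonneg hP

/-- First Griffiths inequality for non-interacting rotors: if `f ∈ 𝓔` then `E f ≥ 0`. -/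
theorem first_griffiths_noninteracting (n N : ℕ) (hn : 2 ≤ n) (hN : 1 ≤ N)
    (f : (Fin N → Metric.sphere (0 : EuclideanSpace ℝ (Fin n)) 1) → ℝ)
    (hf : InCone n N f) :
    0 ≤ ∫ σ, f σ ∂(spinMeasure n N) :=
  first_griffiths_noninteracting_general n N f hf
end

section
/- Let n ≥ 2 and N ≥ 1, and let (J_{ij})_{1≤i<j≤N} be real numbers with J_{ij} ≥ 0 (ferromagnetic couplings). If f belongs to the cone 𝓔, then ∫ f(σ_1,…,σ_N) exp(Σ_{1≤i<j≤N} J_{ij} σ_i·σ_j) dσ_1⋯dσ_N ≥ 0 (first Griffiths inequality with ferromagnetic interaction). -/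
/-!
A polynomial with nonnegative coefficients in the coordinates `σ_i^a` (an element of
`Algebra.adjoin ℝ≥0`) has nonnegative integral, because each coordinate monomial does: the spin
measure is a product, and on one sphere a monomial that is odd in some coordinate changes sign
under the reflection of that coordinate, which preserves the uniform measure. Since `J ≥ 0`, the
product of `f` with a partial sum of `exp (∑ J_ij σ_i·σ_j)` is such a polynomial, and dominated
convergence passes to the exponential.
-/

open MeasureTheory RealInnerProductSpace

open Metric Set
open scoped NNReal Nat Pointwise

namespace LinearIsometryEquiv

variable {E : Type*} [NormedAddCommGroup E] [NormedSpace ℝ E]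

def sphereHomeomorph (e : E ≃ₗᵢ[ℝ] E) : sphere (0 : E) 1 ≃ₜ sphere (0 : E) 1 :=
  e.toHomeomorph.subtype fun x => by simp

@[simp]
theorem coe_sphereHomeomorph_apply (e : E ≃ₗᵢ[ℝ] E) (x : sphere (0 : E) 1) :
    (e.sphereHomeomorph x : E) = e x := rfl

theorem symm_sphereHomeomorph (e : E ≃ₗᵢ[ℝ] E) :
    e.sphereHomeomorph.symm = e.symm.sphereHomeomorph :=
  rfl

end LinearIsometryEquiv

theorem MeasureTheory.Measure.measurePreserving_sphereHomeomorph
    {E : Type*} [NormedAddCommGroup E] [NormedSpace ℝ E] [MeasurableSpace E] [BorelSpace E]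
    {μ : Measure E} (e : E ≃ₗᵢ[ℝ] E) (he : MeasurePreserving e μ μ) :
    MeasurePreserving e.sphereHomeomorph μ.toSphere μ.toSphere := by
  refine ⟨e.sphereHomeomorph.continuous.measurable, Measure.ext fun s hs => ?_⟩
  have hcone : Ioo (0 : ℝ) 1 • ((↑) '' (e.sphereHomeomorph ⁻¹' s) : Set E)
      = e ⁻¹' (Ioo (0 : ℝ) 1 • ((↑) '' s)) := by
    rw [← Homeomorph.image_symm, LinearIsometryEquiv.symm_sphereHomeomorph, image_image,
      ← e.symm_symm, ← e.symm.image_eq_preimage_symm, ← image2_smul, ← image2_smul,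
      image_image2_distrib_right fun a b => map_smul e.symm a b, image_image]
    rfl
  rw [Measure.map_apply e.sphereHomeomorph.continuous.measurable hs,
    toSphere_apply' _ (e.sphereHomeomorph.continuous.measurable hs), toSphere_apply' _ hs, hcone,
    he.measure_preimage_emb e.toHomeomorph.measurableEmbedding]

theorem EuclideanSpace.reflection_orthogonal_single_apply {ι : Type*} [Fintype ι]
    [DecidableEq ι] (a : ι) (x : EuclideanSpace ℝ ι) (b : ι) :
    (ℝ ∙ EuclideanSpace.single a (1 : ℝ))ᗮ.reflection x b = if b = a then -x b else x b := by
  rw [Submodule.reflection_orthogonal_apply, Submodule.reflection_singleton_apply]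
  split_ifs with h <;> simp [h, EuclideanSpace.inner_single_left]
  ring

theorem sphereUniform_isProbabilityMeasure {n : ℕ} (hn : 1 ≤ n) :
    IsProbabilityMeasure (sphereUniform n) := by
  have : Nontrivial (EuclideanSpace ℝ (Fin n)) := by
    have : Nonempty (Fin n) := ⟨⟨0, hn⟩⟩
    infer_instance
  constructor
  rw [sphereUniform, Measure.smul_apply, smul_eq_mul]
  exact ENNReal.inv_mul_cancel (Measure.measure_univ_ne_zero.2 (Measure.toSphere_ne_zero _))
    (measure_ne_top _ _)

theorem integral_sphereUniform_comp_sphereHomeomorph {n : ℕ}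
    (e : EuclideanSpace ℝ (Fin n) ≃ₗᵢ[ℝ] EuclideanSpace ℝ (Fin n))
    (g : sphere (0 : EuclideanSpace ℝ (Fin n)) 1 → ℝ) :
    ∫ x, g (e.sphereHomeomorph x) ∂sphereUniform n = ∫ x, g x ∂sphereUniform n :=
  ((Measure.measurePreserving_sphereHomeomorph e e.measurePreserving).smul_measure
    _).integral_comp e.sphereHomeomorph.measurableEmbedding g

theorem integral_prod_pow_sphereUniform_nonneg {n : ℕ} (m : Fin n → ℕ) :
    0 ≤ ∫ x, ∏ a, (x : EuclideanSpace ℝ (Fin n)) a ^ m a ∂sphereUniform n := by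
  by_cases hev : ∀ a, Even (m a)
  · exact integral_nonneg fun x => Finset.prod_nonneg fun a _ => (hev a).pow_nonneg _
  obtain ⟨a, ha⟩ := not_forall.1 hev
  set R := (ℝ ∙ EuclideanSpace.single a (1 : ℝ))ᗮ.reflection
  have hR : ∀ x : EuclideanSpace ℝ (Fin n), ∏ b, R x b ^ m b = -∏ b, x b ^ m b := by
    intro x
    rw [Fintype.prod_eq_mul_prod_compl a, Fintype.prod_eq_mul_prod_compl a (fun b => x b ^ m b),
      EuclideanSpace.reflection_orthogonal_single_apply, if_pos rfl,
      (Nat.not_even_iff_odd.1 ha).neg_pow, neg_mul]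
    congr 2
    refine Finset.prod_congr rfl fun b hb => ?_
    rw [EuclideanSpace.reflection_orthogonal_single_apply,
      if_neg (Finset.mem_compl.1 hb ∘ Finset.mem_singleton.2)]
  have hinv := integral_sphereUniform_comp_sphereHomeomorph R
    fun x => ∏ b, (x : EuclideanSpace ℝ (Fin n)) b ^ m b
  simp only [LinearIsometryEquiv.coe_sphereHomeomorph_apply, hR, integral_neg] at hinv
  linarith

section NonnegCoefficients

variable {Ω ι : Type*}

theorem continuous_of_mem_adjoin [TopologicalSpace Ω] {u : ι → Ω → ℝ}
    (hu : ∀ i, Continuous (u i)) {g : Ω → ℝ} (hg : g ∈ Algebra.adjoin ℝ≥0 (range u)) :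
    Continuous g := by
  induction hg using Algebra.adjoin_induction with
  | mem g hg => obtain ⟨i, rfl⟩ := hg; exact hu i
  | algebraMap c => exact continuous_const
  | add g h _ _ hg hh => exact hg.add hh
  | mul g h _ _ hg hh => exact hg.mul hh

theorem sum_range_pow_div_factorial_mem {S : Subalgebra ℝ≥0 (Ω → ℝ)} {g : Ω → ℝ} (hg : g ∈ S)
    (M : ℕ) :
    (fun x => ∑ k ∈ Finset.range M, g x ^ k / k !) ∈ S := by
  have : (fun x => ∑ k ∈ Finset.range M, g x ^ k / k !)
      = ∑ k ∈ Finset.range M, ((k ! : ℝ≥0)⁻¹ • g ^ k) := by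
    ext x
    simp [Finset.sum_apply, NNReal.smul_def, div_eq_inv_mul]
  rw [this]
  exact S.sum_mem fun k _ => S.smul_mem (S.pow_mem hg k) _

variable [MeasurableSpace Ω] {μ : Measure Ω}

theorem integrable_and_integral_nonneg_of_mem_adjoin [Fintype ι] {u : ι → Ω → ℝ}
    (hint : ∀ m : ι → ℕ, Integrable (fun x => ∏ i, u i x ^ m i) μ)
    (hpos : ∀ m : ι → ℕ, 0 ≤ ∫ x, ∏ i, u i x ^ m i ∂μ)
    {g : Ω → ℝ} (hg : g ∈ Algebra.adjoin ℝ≥0 (range u)) :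
    Integrable g μ ∧ 0 ≤ ∫ x, g x ∂μ := by
  rw [← Subalgebra.mem_toSubmodule, Algebra.adjoin_eq_span] at hg
  induction hg using Submodule.span_induction with
  | mem g hg =>
    obtain ⟨m, rfl⟩ := Submonoid.mem_closure_range_iff_of_fintype.1 hg
    have hm : ∏ i, u i ^ m i = fun x => ∏ i, u i x ^ m i := by ext; simp [Finset.prod_apply]
    exact hm ▸ ⟨hint m, hpos m⟩
  | zero => simp
  | add g h _ _ hg hh =>
    refine ⟨hg.1.add hh.1, ?_⟩
    rw [Pi.add_def, integral_add hg.1 hh.1]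
    exact add_nonneg hg.2 hh.2
  | smul c g _ hg =>
    rw [NNReal.smul_def]
    refine ⟨hg.1.smul (c : ℝ), ?_⟩
    rw [Pi.smul_def, integral_smul]
    exact smul_nonneg c.2 hg.2

theorem integral_mul_exp_nonneg_of_partialSums {f H : Ω → ℝ} (hf : AEStronglyMeasurable f μ)
    (hH : AEStronglyMeasurable H μ) (hdom : Integrable (fun x => |f x| * Real.exp |H x|) μ)
    (hpartial : ∀ M, 0 ≤ ∫ x, f x * ∑ k ∈ Finset.range M, H x ^ k / k ! ∂μ) :
    0 ≤ ∫ x, f x * Real.exp (H x) ∂μ := by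
  refine ge_of_tendsto (tendsto_integral_of_dominated_convergence _ (fun M => ?_) hdom
    (fun M => Filter.Eventually.of_forall fun x => ?_) (Filter.Eventually.of_forall fun x => ?_))
    (Filter.Eventually.of_forall hpartial)
  · fun_prop
  · rw [norm_mul, Real.norm_eq_abs]
    gcongr
    calc ‖∑ k ∈ Finset.range M, (H x ^ k / k !)‖
        ≤ ∑ k ∈ Finset.range M, (|H x| ^ k / k !) := by
          refine (norm_sum_le _ _).trans_eq (Finset.sum_congr rfl fun k _ => ?_)
          simp
      _ ≤ Real.exp |H x| := Real.sum_le_exp_of_nonneg (abs_nonneg _) M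
  · refine Filter.Tendsto.const_mul _ ?_
    rw [Real.exp_eq_exp_ℝ]
    exact (NormedSpace.expSeries_div_hasSum_exp (H x)).tendsto_sum_nat

end NonnegCoefficients

section Spins

variable {n N : ℕ}

local notation "𝔼" n:max => EuclideanSpace ℝ (Fin n)

def spinCoord (n N : ℕ) (p : Fin N × Fin n) (σ : Fin N → sphere (0 : 𝔼 n) 1) : ℝ :=
  (σ p.1 : 𝔼 n) p.2

@[fun_prop]
theorem continuous_spinCoord (p : Fin N × Fin n) : Continuous (spinCoord n N p) := by
  unfold spinCoord; fun_prop

theorem spinMeasure_isProbabilityMeasure (hn : 1 ≤ n) : IsProbabilityMeasure (spinMeasure n N) :=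
  have := sphereUniform_isProbabilityMeasure hn
  inferInstanceAs (IsProbabilityMeasure (Measure.pi _))

theorem integral_prod_spinCoord_pow_nonneg (hn : 1 ≤ n) (m : Fin N × Fin n → ℕ) :
    0 ≤ ∫ σ, ∏ p, spinCoord n N p σ ^ m p ∂spinMeasure n N := by
  have := sphereUniform_isProbabilityMeasure hn
  simp only [Fintype.prod_prod_type, spinCoord]
  rw [spinMeasure, integral_fintype_prod_eq_prod
    (fun i (x : sphere (0 : 𝔼 n) 1) => ∏ a, (x : 𝔼 n) a ^ m (i, a))]
  exact Finset.prod_nonneg fun i _ => integral_prod_pow_sphereUniform_nonneg _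

theorem inner_mem_adjoin_spinCoord (i j : Fin N) :
    (fun σ : Fin N → sphere (0 : 𝔼 n) 1 => ⟪(σ i : 𝔼 n), (σ j : 𝔼 n)⟫)
      ∈ Algebra.adjoin ℝ≥0 (range (spinCoord n N)) := by
  have : (fun σ : Fin N → sphere (0 : 𝔼 n) 1 => ⟪(σ i : 𝔼 n), (σ j : 𝔼 n)⟫)
      = ∑ a, spinCoord n N (i, a) * spinCoord n N (j, a) := by
    ext σ
    simp [Finset.sum_apply, spinCoord, PiLp.inner_apply, mul_comm]
  rw [this]
  exact Subalgebra.sum_mem _ fun a _ => Subalgebra.mul_mem _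
    (Algebra.subset_adjoin ⟨_, rfl⟩) (Algebra.subset_adjoin ⟨_, rfl⟩)

theorem InCone.mem_adjoin {f : (Fin N → sphere (0 : 𝔼 n) 1) → ℝ} (hf : InCone n N f) :
    f ∈ Algebra.adjoin ℝ≥0 (range (spinCoord n N)) := by
  obtain ⟨K, c, e, hc, hf⟩ := hf
  have : f = ∑ k, (⟨c k, hc k⟩ : ℝ≥0) •
      ∏ p ∈ Finset.univ.filter (fun p : Fin N × Fin N => p.1 < p.2),
        (fun σ : Fin N → sphere (0 : 𝔼 n) 1 => ⟪(σ p.1 : 𝔼 n), (σ p.2 : 𝔼 n)⟫) ^ e k p.1 p.2 := by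
    ext σ
    simp [hf, Finset.sum_apply, Finset.prod_apply]
  rw [this]
  exact Subalgebra.sum_mem _ fun k _ => Subalgebra.smul_mem _ (Subalgebra.prod_mem _ fun p _ =>
    Subalgebra.pow_mem _ (inner_mem_adjoin_spinCoord _ _) _) _

theorem sum_mul_inner_mem_adjoin_spinCoord (s : Finset (Fin N × Fin N))
    {J : Fin N → Fin N → ℝ} (hJ : ∀ i j, 0 ≤ J i j) :
    (fun σ : Fin N → sphere (0 : 𝔼 n) 1 =>
        ∑ p ∈ s, J p.1 p.2 * ⟪(σ p.1 : 𝔼 n), (σ p.2 : 𝔼 n)⟫)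
      ∈ Algebra.adjoin ℝ≥0 (range (spinCoord n N)) := by
  have : (fun σ : Fin N → sphere (0 : 𝔼 n) 1 =>
        ∑ p ∈ s, J p.1 p.2 * ⟪(σ p.1 : 𝔼 n), (σ p.2 : 𝔼 n)⟫)
      = ∑ p ∈ s, (⟨J p.1 p.2, hJ _ _⟩ : ℝ≥0) •
        fun σ : Fin N → sphere (0 : 𝔼 n) 1 => ⟪(σ p.1 : 𝔼 n), (σ p.2 : 𝔼 n)⟫ := by
    ext σ
    simp [Finset.sum_apply]
  rw [this]
  exact Subalgebra.sum_mem _ fun p _ => Subalgebra.smul_mem _ (inner_mem_adjoin_spinCoord _ _) _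

end Spins

theorem first_griffiths_ferromagnetic_general (n N : ℕ) (hn : 2 ≤ n)
    (J : Fin N → Fin N → ℝ) (hJ : ∀ i j, 0 ≤ J i j)
    (f : (Fin N → Metric.sphere (0 : EuclideanSpace ℝ (Fin n)) 1) → ℝ)
    (hf : InCone n N f) :
    0 ≤ ∫ σ, f σ *
        Real.exp (∑ p ∈ Finset.univ.filter (fun p : Fin N × Fin N => p.1 < p.2),
          J p.1 p.2 *
            (⟪(σ p.1 : EuclideanSpace ℝ (Fin n)), (σ p.2 : EuclideanSpace ℝ (Fin n))⟫ : ℝ))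
      ∂(spinMeasure n N) := by
  have hn₁ : 1 ≤ n := by omega
  have := spinMeasure_isProbabilityMeasure (N := N) hn₁
  have hint : ∀ g : (Fin N → sphere (0 : EuclideanSpace ℝ (Fin n)) 1) → ℝ,
      Continuous g → Integrable g (spinMeasure n N) :=
    fun g hg => hg.integrable_of_hasCompactSupport (.of_compactSpace g)
  have hf_mem := hf.mem_adjoin
  have hH_mem := sum_mul_inner_mem_adjoin_spinCoord (n := n)
    (Finset.univ.filter fun p : Fin N × Fin N => p.1 < p.2) hJ
  have hf_cont := continuous_of_mem_adjoin continuous_spinCoord hf_mem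
  have hH_cont := continuous_of_mem_adjoin continuous_spinCoord hH_mem
  refine integral_mul_exp_nonneg_of_partialSums hf_cont.aestronglyMeasurable
    hH_cont.aestronglyMeasurable ?_ fun M => ?_
  · exact hint _ (by fun_prop)
  · exact (integrable_and_integral_nonneg_of_mem_adjoin (fun m => hint _ (by fun_prop))
      (integral_prod_spinCoord_pow_nonneg hn₁)
      (mul_mem hf_mem (sum_range_pow_div_factorial_mem hH_mem M))).2

/-- First Griffiths inequality with ferromagnetic interaction:
if `f ∈ 𝓔` and `J_{ij} ≥ 0`, then
`∫ f(σ) exp(∑_{i<j} J_{ij} σ_i·σ_j) dσ₁ ⋯ dσ_N ≥ 0`. -/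
theorem first_griffiths_ferromagnetic (n N : ℕ) (hn : 2 ≤ n) (hN : 1 ≤ N)
    (J : Fin N → Fin N → ℝ) (hJ : ∀ i j, 0 ≤ J i j)
    (f : (Fin N → Metric.sphere (0 : EuclideanSpace ℝ (Fin n)) 1) → ℝ)
    (hf : InCone n N f) :
    0 ≤ ∫ σ, f σ *
        Real.exp (∑ p ∈ Finset.univ.filter (fun p : Fin N × Fin N => p.1 < p.2),
          J p.1 p.2 *
            (⟪(σ p.1 : EuclideanSpace ℝ (Fin n)), (σ p.2 : EuclideanSpace ℝ (Fin n))⟫ : ℝ))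
      ∂(spinMeasure n N) :=
  first_griffiths_ferromagnetic_general n N hn J hJ f hf
end

section
/- Let n ≥ 2, M ≥ 1, and nonnegative integers n_1,…,n_M. There exists a polynomial Q in the variables (y_{ij})_{1≤i≤j≤M} with nonnegative real coefficients such that for all a_1,…,a_M ∈ ℝ^n, ∫_{S^{n-1}} ∏_{k=1}^M (σ·a_k)^{n_k} dσ = Q((a_i·a_j)_{1≤i≤j≤M}). That is, the spherical average of a product of powers of linear forms is a nonnegative combination of monomials in the pairwise inner products of the vectors a_k. -/
open MeasureTheory RealInnerProductSpace

/-!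
Write `γ x = exp (-‖x‖² / 2)`. In polar coordinates the Gaussian integral of a product of `N`
linear forms is its spherical integral times the positive radial factor
`∫₀^∞ r ^ (N + n - 1) γ r dr`, so it suffices to treat Gaussian integrals. Gaussian integration by
parts, `∫ ⟪x, w⟫ f x γ x = ∫ ∂_w f x γ x`, gives Wick's recursion
`∫ ∏_{j ∈ s} ⟪x, v j⟫ γ = ∑_{j ∈ s \ {j₀}} ⟪v j₀, v j⟫ ∫ ∏_{i ∈ s \ {j₀, j}} ⟪x, v i⟫ γ`,
and induction on `s` makes these moments polynomials with nonnegative coefficients in the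
inner products `⟪v i, v j⟫`.
-/

open Real Set
open scoped NNReal

section Gram

variable (κ : Type*) [LinearOrder κ] (E : Type*) [NormedAddCommGroup E] [InnerProductSpace ℝ E]

/-- Taking the polynomials over `ℝ≥0` makes nonnegativity of the coefficients automatic. -/
noncomputable def nonnegGramPolynomials : Subalgebra ℝ≥0 ((κ → E) → ℝ) :=
  (MvPolynomial.aeval fun (p : {p : κ × κ // p.1 ≤ p.2}) (a : κ → E) ↦ ⟪a p.1.1, a p.1.2⟫).range

variable {κ E}

lemma inner_mem_nonnegGramPolynomials (i j : κ) :
    (fun a : κ → E ↦ ⟪a i, a j⟫) ∈ nonnegGramPolynomials κ E := by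
  rcases le_total i j with h | h
  · exact ⟨MvPolynomial.X ⟨(i, j), h⟩, MvPolynomial.aeval_X _ _⟩
  · refine ⟨MvPolynomial.X ⟨(j, i), h⟩, ?_⟩
    ext a
    simp [real_inner_comm]

lemma const_mem_nonnegGramPolynomials {c : ℝ} (hc : 0 ≤ c) :
    (fun _ : κ → E ↦ c) ∈ nonnegGramPolynomials κ E :=
  Subalgebra.algebraMap_mem (R := ℝ≥0) _ ⟨c, hc⟩

lemma exists_eval_eq_of_mem_nonnegGramPolynomials {F : (κ → E) → ℝ}
    (hF : F ∈ nonnegGramPolynomials κ E) :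
    ∃ Q : MvPolynomial {p : κ × κ // p.1 ≤ p.2} ℝ, (∀ d, 0 ≤ Q.coeff d) ∧
      ∀ a, F a = MvPolynomial.eval (fun p ↦ ⟪a p.1.1, a p.1.2⟫) Q := by
  obtain ⟨Q, rfl⟩ := hF
  refine ⟨MvPolynomial.map (algebraMap ℝ≥0 ℝ) Q, fun d ↦ ?_, fun a ↦ ?_⟩
  · rw [MvPolynomial.coeff_map]
    exact (Q.coeff d).2
  · rw [MvPolynomial.eval_map, ← MvPolynomial.aeval_def]
    exact MvPolynomial.comp_aeval_apply _ (Pi.evalAlgHom ℝ≥0 (fun _ ↦ ℝ) a) Q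

end Gram

section Gaussian

variable {E : Type*} [NormedAddCommGroup E] [InnerProductSpace ℝ E]

lemma hasFDerivAt_exp_neg_norm_sq_div_two (x : E) :
    HasFDerivAt (fun x : E ↦ exp (-‖x‖ ^ 2 / 2)) (-exp (-‖x‖ ^ 2 / 2) • innerSL ℝ x) x := by
  have := ((hasFDerivAt_id x).norm_sq.const_mul (-2⁻¹ : ℝ)).exp
  convert this using 1
  · ext y; simp only [id]; ring_nf
  · ext v; simp [smul_smul]; ring_nf

lemma hasFDerivAt_prod_inner {ι : Type*} [DecidableEq ι] (v : ι → E) (s : Finset ι) (x : E) :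
    HasFDerivAt (fun x ↦ ∏ j ∈ s, ⟪x, v j⟫)
      (∑ j ∈ s, (∏ i ∈ s.erase j, ⟪x, v i⟫) • innerSL ℝ (v j)) x := by
  refine HasFDerivAt.finsetProd fun j _ ↦ ?_
  have : (fun y ↦ ⟪y, v j⟫) = innerSL ℝ (v j) := funext fun y ↦ real_inner_comm _ _
  exact this ▸ (innerSL ℝ (v j)).hasFDerivAt

variable [FiniteDimensional ℝ E] [MeasurableSpace E] [BorelSpace E] (μ : Measure E)
  [μ.IsAddHaarMeasure]

lemma integrable_norm_pow_mul_exp_neg_norm_sq_div_two (N : ℕ) :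
    Integrable (fun x : E ↦ ‖x‖ ^ N * exp (-‖x‖ ^ 2 / 2)) μ := by
  rcases subsingleton_or_nontrivial E with _ | _
  · exact .of_finite
  refine (integrable_fun_norm_addHaar μ (f := fun r ↦ r ^ N * exp (-r ^ 2 / 2))).2 ?_
  have := integrableOn_rpow_mul_exp_neg_mul_sq (b := 2⁻¹) (by norm_num)
    (s := (Module.finrank ℝ E - 1 + N : ℕ)) (neg_one_lt_zero.trans_le (Nat.cast_nonneg _))
  refine this.congr_fun (fun r _ ↦ ?_) measurableSet_Ioi
  simp only [rpow_natCast, smul_eq_mul, pow_add]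
  ring_nf

lemma integrable_prod_inner_mul_exp_neg_norm_sq_div_two {ι : Type*} (v : ι → E) (s : Finset ι) :
    Integrable (fun x : E ↦ (∏ j ∈ s, ⟪x, v j⟫) * exp (-‖x‖ ^ 2 / 2)) μ := by
  refine ((integrable_norm_pow_mul_exp_neg_norm_sq_div_two μ s.card).const_mul
    (∏ j ∈ s, ‖v j‖)).mono' (by fun_prop) (.of_forall fun x ↦ ?_)
  rw [norm_mul, norm_prod, Real.norm_of_nonneg (exp_pos _).le, ← mul_assoc]
  gcongr
  calc ∏ j ∈ s, ‖⟪x, v j⟫‖ ≤ ∏ j ∈ s, ‖v j‖ * ‖x‖ :=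
        Finset.prod_le_prod (fun _ _ ↦ norm_nonneg _) fun j _ ↦ by
          rw [mul_comm]; exact norm_inner_le_norm x (v j)
    _ = _ := by rw [Finset.prod_mul_distrib, Finset.prod_const]

theorem integral_inner_mul_exp_neg_norm_sq_div_two {f : E → ℝ} {f' : E → E →L[ℝ] ℝ} (w : E)
    (hf : ∀ x, HasFDerivAt f (f' x) x)
    (hfγ : Integrable (fun x ↦ f x * exp (-‖x‖ ^ 2 / 2)) μ)
    (hf'γ : Integrable (fun x ↦ f' x w * exp (-‖x‖ ^ 2 / 2)) μ)
    (hxfγ : Integrable (fun x ↦ ⟪x, w⟫ * f x * exp (-‖x‖ ^ 2 / 2)) μ) :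
    ∫ x, ⟪x, w⟫ * f x * exp (-‖x‖ ^ 2 / 2) ∂μ = ∫ x, f' x w * exp (-‖x‖ ^ 2 / 2) ∂μ := by
  have hfγ' : Integrable (fun x ↦ f x * (-exp (-‖x‖ ^ 2 / 2) • innerSL ℝ x) w) μ := by
    refine hxfγ.neg.congr (.of_forall fun x ↦ ?_)
    simp only [Pi.neg_apply, smul_apply, innerSL_apply_apply, smul_eq_mul]
    ring
  have := integral_bilinear_hasFDerivAt_right_eq_neg_left_of_integrable
    (B := ContinuousLinearMap.mul ℝ ℝ) hf'γ hfγ' hfγ (fun x _ ↦ hf x)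
    (fun x _ ↦ hasFDerivAt_exp_neg_norm_sq_div_two x)
  simp only [ContinuousLinearMap.mul_apply', smul_apply, innerSL_apply_apply,
    smul_eq_mul] at this
  rw [← neg_inj, ← this, ← integral_neg]
  congr 1; ext x; ring

noncomputable def gaussianMoment {ι : Type*} (v : ι → E) (s : Finset ι) : ℝ :=
  ∫ x, (∏ j ∈ s, ⟪x, v j⟫) * exp (-‖x‖ ^ 2 / 2) ∂μ

theorem gaussianMoment_eq_sum_erase {ι : Type*} [DecidableEq ι] (v : ι → E) {s : Finset ι}
    {j₀ : ι} (hj₀ : j₀ ∈ s) :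
    gaussianMoment μ v s =
      ∑ j ∈ s.erase j₀, ⟪v j₀, v j⟫ * gaussianMoment μ v ((s.erase j₀).erase j) := by
  set t := s.erase j₀
  have hint := integrable_prod_inner_mul_exp_neg_norm_sq_div_two μ v
  have hsplit (x : E) : ∏ j ∈ s, ⟪x, v j⟫ = ⟪x, v j₀⟫ * ∏ j ∈ t, ⟪x, v j⟫ :=
    (Finset.mul_prod_erase s (fun j ↦ ⟪x, v j⟫) hj₀).symm
  have hderiv (x : E) :
      (∑ j ∈ t, (∏ i ∈ t.erase j, ⟪x, v i⟫) • innerSL ℝ (v j)) (v j₀) * exp (-‖x‖ ^ 2 / 2) =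
        ∑ j ∈ t, ⟪v j₀, v j⟫ * ((∏ i ∈ t.erase j, ⟪x, v i⟫) * exp (-‖x‖ ^ 2 / 2)) := by
    simp only [sum_apply, smul_apply, innerSL_apply_apply, smul_eq_mul,
      Finset.sum_mul, real_inner_comm (v j₀)]
    exact Finset.sum_congr rfl fun j _ ↦ by ring
  calc gaussianMoment μ v s
      = ∫ x, ⟪x, v j₀⟫ * (∏ j ∈ t, ⟪x, v j⟫) * exp (-‖x‖ ^ 2 / 2) ∂μ := by
        simp only [gaussianMoment, hsplit]
    _ = ∫ x, ∑ j ∈ t, ⟪v j₀, v j⟫ * ((∏ i ∈ t.erase j, ⟪x, v i⟫) * exp (-‖x‖ ^ 2 / 2)) ∂μ := by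
        simp only [← hderiv]
        refine integral_inner_mul_exp_neg_norm_sq_div_two μ (v j₀)
          (fun x ↦ hasFDerivAt_prod_inner v t x) (hint t) ?_ ?_
        · simp only [hderiv]
          exact integrable_finsetSum _ fun j _ ↦ (hint _).const_mul _
        · simpa only [hsplit, mul_assoc] using hint s
    _ = _ := by
        rw [integral_finsetSum _ fun j _ ↦ (hint _).const_mul _]
        simp only [integral_const_mul, gaussianMoment]

theorem gaussianMoment_mem_nonnegGramPolynomials {κ ι : Type*} [LinearOrder κ] [DecidableEq ι]
    (c : ι → κ) (s : Finset ι) :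
    (fun a : κ → E ↦ gaussianMoment μ (fun j ↦ a (c j)) s) ∈ nonnegGramPolynomials κ E := by
  induction s using Finset.strongInduction with
  | H s ih =>
  rcases s.eq_empty_or_nonempty with rfl | ⟨j₀, hj₀⟩
  · simp only [gaussianMoment, Finset.prod_empty, one_mul]
    exact const_mem_nonnegGramPolynomials (integral_nonneg fun x ↦ (exp_pos _).le)
  · have : (fun a : κ → E ↦ gaussianMoment μ (fun j ↦ a (c j)) s) =
        ∑ j ∈ s.erase j₀, (fun a : κ → E ↦ ⟪a (c j₀), a (c j)⟫) *
          fun a ↦ gaussianMoment μ (fun i ↦ a (c i)) ((s.erase j₀).erase j) := by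
      ext a
      simp [gaussianMoment_eq_sum_erase μ _ hj₀]
    rw [this]
    exact Subalgebra.sum_mem _ fun j hj ↦ Subalgebra.mul_mem _
      (inner_mem_nonnegGramPolynomials _ _)
      (ih _ ((Finset.erase_ssubset hj).trans (Finset.erase_ssubset hj₀)))

end Gaussian

section Polar

variable {E : Type*} [NormedAddCommGroup E] [InnerProductSpace ℝ E] [FiniteDimensional ℝ E]
  [MeasurableSpace E] [BorelSpace E] (μ : Measure E) [μ.IsAddHaarMeasure]

theorem integral_homogeneous_mul_fun_norm [Nontrivial E] {f : E → ℝ} {N : ℕ}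
    (hf : ∀ r : ℝ, 0 < r → ∀ x, f (r • x) = r ^ N * f x) (g : ℝ → ℝ) :
    ∫ x, f x * g ‖x‖ ∂μ =
      (∫ σ : Metric.sphere (0 : E) 1, f σ ∂μ.toSphere) *
        ∫ r in Ioi (0 : ℝ), r ^ (N + (Module.finrank ℝ E - 1)) * g r := by
  set d := Module.finrank ℝ E - 1
  have hpolar (p : Metric.sphere (0 : E) 1 × Ioi (0 : ℝ)) :
      f ((homeomorphUnitSphereProd E).symm p) * g ‖((homeomorphUnitSphereProd E).symm p : E)‖ =
        f p.1 * ((p.2 : ℝ) ^ N * g p.2) := by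
    obtain ⟨σ, r, hr : 0 < r⟩ := p
    simp [homeomorphUnitSphereProd_symm_apply_coe, hf r hr, norm_smul, abs_of_pos hr]
    ring
  calc ∫ x, f x * g ‖x‖ ∂μ
      = ∫ x : ({0}ᶜ : Set E), f x * g ‖(x : E)‖ ∂(μ.comap Subtype.val) := by
        rw [integral_subtype_comap (measurableSet_singleton _).compl (fun x ↦ f x * g ‖x‖),
          restrict_compl_singleton]
    _ = ∫ p : Metric.sphere (0 : E) 1 × Ioi (0 : ℝ), f p.1 * ((p.2 : ℝ) ^ N * g p.2)
          ∂(μ.toSphere.prod (Measure.volumeIoiPow d)) := by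
        simp only [← hpolar]
        rw [← μ.measurePreserving_homeomorphUnitSphereProd.integral_comp
          (Homeomorph.measurableEmbedding _)]
        simp
    _ = (∫ σ : Metric.sphere (0 : E) 1, f σ ∂μ.toSphere) *
          ∫ r : Ioi (0 : ℝ), (r : ℝ) ^ N * g r ∂(Measure.volumeIoiPow d) :=
        integral_prod_mul (fun σ : Metric.sphere (0 : E) 1 ↦ f σ)
          fun r : Ioi (0 : ℝ) ↦ (r : ℝ) ^ N * g r
    _ = _ := by
        congr 1
        simp only [Measure.volumeIoiPow, ENNReal.ofReal]
        rw [integral_withDensity_eq_integral_smul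
            (measurable_subtype_coe.pow_const _).real_toNNReal,
          integral_subtype_comap measurableSet_Ioi (fun r ↦ (r ^ d).toNNReal • (r ^ N * g r))]
        refine setIntegral_congr_fun measurableSet_Ioi fun r (hr : 0 < r) ↦ ?_
        rw [NNReal.smul_def, Real.coe_toNNReal _ (pow_nonneg hr.le _), smul_eq_mul, pow_add]
        ring

theorem gaussianMoment_eq_integral_sphere_mul [Nontrivial E] {ι : Type*} (v : ι → E)
    (s : Finset ι) :
    gaussianMoment μ v s = (∫ σ : Metric.sphere (0 : E) 1, ∏ j ∈ s, ⟪(σ : E), v j⟫ ∂μ.toSphere) *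
      ∫ r in Ioi (0 : ℝ), r ^ (s.card + (Module.finrank ℝ E - 1)) * exp (-r ^ 2 / 2) := by
  refine integral_homogeneous_mul_fun_norm μ (fun r _ x ↦ ?_) fun r ↦ exp (-r ^ 2 / 2)
  simp [real_inner_smul_left, Finset.prod_mul_distrib]

end Polar

lemma integral_Ioi_pow_mul_exp_neg_sq_div_two_pos (k : ℕ) :
    0 < ∫ r in Ioi (0 : ℝ), r ^ k * exp (-r ^ 2 / 2) := by
  have h := integral_rpow_mul_exp_neg_mul_rpow (p := 2) (q := k) (b := 2⁻¹) two_pos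
    (neg_one_lt_zero.trans_le k.cast_nonneg) (by norm_num)
  have : ∫ r in Ioi (0 : ℝ), r ^ k * exp (-r ^ 2 / 2) =
      ∫ r in Ioi (0 : ℝ), r ^ (k : ℝ) * exp (-2⁻¹ * r ^ (2 : ℝ)) := by
    refine setIntegral_congr_fun measurableSet_Ioi fun r _ ↦ ?_
    simp only [rpow_natCast, rpow_two]
    ring_nf
  rw [this, h]
  have := Real.Gamma_pos_of_pos (s := ((k : ℝ) + 1) / 2) (by positivity)
  positivity

theorem sphere_integral_poly_in_inner_products_general (n M : ℕ) (hn : 2 ≤ n)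
    (m : Fin M → ℕ) :
    ∃ Q : MvPolynomial {p : Fin M × Fin M // p.1 ≤ p.2} ℝ,
      (∀ d, 0 ≤ Q.coeff d) ∧
      ∀ a : Fin M → EuclideanSpace ℝ (Fin n),
        ∫ σ : Metric.sphere (0 : EuclideanSpace ℝ (Fin n)) 1,
            ∏ k, (⟪(σ : EuclideanSpace ℝ (Fin n)), a k⟫ : ℝ) ^ m k ∂(sphereUniform n)
          = MvPolynomial.eval (fun p => (⟪a p.1.1, a p.1.2⟫ : ℝ)) Q := by
  have : Nontrivial (EuclideanSpace ℝ (Fin n)) := by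
    have : Nontrivial (Fin n) := Fin.nontrivial_iff_two_le.2 hn
    infer_instance
  set c := ∫ r in Ioi (0 : ℝ), r ^ (∑ k, m k + (n - 1)) * exp (-r ^ 2 / 2)
  have hc : 0 < c := integral_Ioi_pow_mul_exp_neg_sq_div_two_pos _
  set t := ((volume : Measure (EuclideanSpace ℝ (Fin n))).toSphere univ)⁻¹.toReal
  -- the factor `⟪x, a k⟫` is repeated `m k` times, indexed by `⟨k, i⟩ : Σ k, Fin (m k)`
  have key (a : Fin M → EuclideanSpace ℝ (Fin n)) :
      ∫ σ, ∏ k, ⟪(σ : EuclideanSpace ℝ (Fin n)), a k⟫ ^ m k ∂(sphereUniform n) =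
        t * c⁻¹ * gaussianMoment volume (fun j : (Σ k, Fin (m k)) ↦ a j.1) Finset.univ := by
    rw [gaussianMoment_eq_integral_sphere_mul, Finset.card_univ, Fintype.card_sigma,
      finrank_euclideanSpace_fin, sphereUniform, integral_smul_measure]
    simp only [Fintype.prod_sigma, Finset.prod_const, Finset.card_univ, Fintype.card_fin,
      smul_eq_mul]
    change t * _ = t * c⁻¹ * (_ * c)
    field_simp
  refine exists_eval_eq_of_mem_nonnegGramPolynomials ?_
  simp only [key]
  exact Subalgebra.mul_mem _ (const_mem_nonnegGramPolynomials (by positivity))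
    (gaussianMoment_mem_nonnegGramPolynomials volume Sigma.fst Finset.univ)

/-- The spherical average of a product of powers of linear forms is a polynomial with
nonnegative coefficients in the pairwise inner products `a_i·a_j` (for `i ≤ j`). -/
theorem sphere_integral_poly_in_inner_products (n M : ℕ) (hn : 2 ≤ n) (hM : 1 ≤ M)
    (m : Fin M → ℕ) :
    ∃ Q : MvPolynomial {p : Fin M × Fin M // p.1 ≤ p.2} ℝ,
      (∀ d, 0 ≤ Q.coeff d) ∧
      ∀ a : Fin M → EuclideanSpace ℝ (Fin n),
        ∫ σ : Metric.sphere (0 : EuclideanSpace ℝ (Fin n)) 1,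
            ∏ k, (⟪(σ : EuclideanSpace ℝ (Fin n)), a k⟫ : ℝ) ^ m k ∂(sphereUniform n)
          = MvPolynomial.eval (fun p => (⟪a p.1.1, a p.1.2⟫ : ℝ)) Q :=
  sphere_integral_poly_in_inner_products_general n M hn m
end

section
/- Let F be a real symmetric positive definite N×N matrix whose off-diagonal entries are all ≤ 0. Then all entries of F^{-1} are nonnegative. -/
/-!
Let `x` be the `j`-th column of `F⁻¹`, so that `F x = e_j ≥ 0`, and split `x = x⁺ - x⁻`.
Since `x⁻` and `x⁺` have disjoint supports, only off-diagonal entries of `F` enter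
`x⁻ ⬝ F x⁺`, which is therefore `≤ 0`. Hence
`x⁻ ⬝ F x⁻ = x⁻ ⬝ F x⁺ - x⁻ ⬝ F x ≤ 0`, and positive definiteness forces `x⁻ = 0`.
-/

open Matrix

section ZMatrix

variable {ι R : Type*} [Fintype ι] [CommRing R] [LinearOrder R] [IsStrictOrderedRing R]

lemma negPart_mul_posPart_eq_zero (a : R) : a⁻ * a⁺ = 0 := by
  rcases le_total 0 a with ha | ha
  · simp [negPart_eq_zero.mpr ha]
  · simp [posPart_eq_zero.mpr ha]

lemma negPart_dotProduct_mulVec_posPart_nonpos {F : Matrix ι ι R}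
    (hF : ∀ i j, i ≠ j → F i j ≤ 0) (x : ι → R) : x⁻ ⬝ᵥ (F *ᵥ x⁺) ≤ 0 := by
  simp only [dotProduct, mulVec, Finset.mul_sum]
  refine Finset.sum_nonpos fun i _ => Finset.sum_nonpos fun k _ => ?_
  rw [Pi.negPart_apply, Pi.posPart_apply]
  by_cases hik : i = k
  · subst hik
    rw [mul_left_comm, negPart_mul_posPart_eq_zero, mul_zero]
  · exact mul_nonpos_of_nonneg_of_nonpos (negPart_nonneg _)
      (mul_nonpos_of_nonpos_of_nonneg (hF i k hik) (posPart_nonneg _))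

variable [StarRing R] [TrivialStar R]

lemma Matrix.PosDef.nonneg_of_mulVec_nonneg {F : Matrix ι ι R} (hpos : F.PosDef)
    (hF : ∀ i j, i ≠ j → F i j ≤ 0) {x : ι → R} (hx : 0 ≤ F *ᵥ x) : 0 ≤ x := by
  rw [← negPart_eq_zero]
  by_contra hneg
  have hquad : 0 < x⁻ ⬝ᵥ (F *ᵥ x⁻) := by
    simpa only [star_trivial] using hpos.dotProduct_mulVec_pos hneg
  have hcross : 0 ≤ x⁻ ⬝ᵥ (F *ᵥ x) := dotProduct_nonneg_of_nonneg (negPart_nonneg x) hx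
  have hsplit : x⁻ ⬝ᵥ (F *ᵥ x⁻) = x⁻ ⬝ᵥ (F *ᵥ x⁺) - x⁻ ⬝ᵥ (F *ᵥ x) := by
    rw [← sub_sub_cancel (x⁻ ⬝ᵥ (F *ᵥ x⁺)) (x⁻ ⬝ᵥ (F *ᵥ x⁻)), ← dotProduct_sub, ← mulVec_sub,
      posPart_sub_negPart]
  linarith [negPart_dotProduct_mulVec_posPart_nonpos hF x]

end ZMatrix

theorem matrix_inv_ferromagnetic_nonneg_general (N : ℕ) (F : Matrix (Fin N) (Fin N) ℝ)
    (hpos : F.PosDef) (hferro : ∀ i j, i ≠ j → F i j ≤ 0) :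
    ∀ i j, 0 ≤ F⁻¹ i j := by
  intro i j
  have hcol : F *ᵥ (F⁻¹ *ᵥ Pi.single j 1) = Pi.single j 1 := by
    rw [mulVec_mulVec, mul_nonsing_inv _ (hpos.isUnit.map detMonoidHom), one_mulVec]
  have hsingle : (0 : Fin N → ℝ) ≤ Pi.single j 1 := Pi.single_nonneg.mpr zero_le_one
  have hcol_nonneg := hpos.nonneg_of_mulVec_nonneg hferro (hcol ▸ hsingle) i
  rwa [mulVec_single_one] at hcol_nonneg

/-- If `F` is a real symmetric positive definite matrix with nonpositive off-diagonal
entries, then all entries of `F⁻¹` are nonnegative. -/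
theorem matrix_inv_ferromagnetic_nonneg (N : ℕ) (F : Matrix (Fin N) (Fin N) ℝ)
    (hsym : F.IsSymm) (hpos : F.PosDef) (hferro : ∀ i j, i ≠ j → F i j ≤ 0) :
    ∀ i j, 0 ≤ F⁻¹ i j :=
  matrix_inv_ferromagnetic_nonneg_general N F hpos hferro
end
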